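/- arXiv:0907.1956 — 4 statements merged into one kernel-verified Lean document; each statement's English description precedes it below -/
import Mathlib

section
/- Let S be a finite set of size N, V₀(s) = 0, Vₙ(s) = r(s) + max_{x ∈ X} min_{s' ∈ S(s,x)} V_{n-1}(s') with r : S → {0,1}, X finite nonempty, S(s,x) ⊆ S nonempty. Define Sₙ = {s ∈ S : Vₙ(s) = 0}. Then: min_{s ∈ S} V_N(s) = 0 if and only if lim_{n→∞} min_{s ∈ S} Vₙ(s) = 0 (equivalently, min_s Vₙ(s) = 0 for all n). -/
/-- Lemma 3 of the paper: with `V 0 = 0`,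
`V (n+1) s = r s + max_x min_{s' ∈ T s x} V n s'`, `r : S → {0,1}`, and
`N = |S|`, the minimum value `min_s V N s` is zero if and only if
`min_s V n s = 0` for every `n` (equivalently, the limit of the nondecreasing
sequence `min_s V n s` is zero). -/
theorem dp_min_value_zero_iff {S X : Type*} [Fintype S] [Nonempty S]
    [Fintype X] [Nonempty X]
    (r : S → ℝ) (hr : ∀ s, r s = 0 ∨ r s = 1)
    (T : S → X → Finset S) (hT : ∀ s x, (T s x).Nonempty)
    (V : ℕ → S → ℝ) (hV0 : ∀ s, V 0 s = 0)
    (hrec : ∀ n s, V (n + 1) s =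
      r s + Finset.univ.sup' Finset.univ_nonempty
        (fun x => (T s x).inf' (hT s x) (fun s' => V n s'))) :
    Finset.univ.inf' Finset.univ_nonempty (V (Fintype.card S)) = 0 ↔
      ∀ n, Finset.univ.inf' Finset.univ_nonempty (V n) = 0 := by
  classical
  set N := Fintype.card S with hNdef
  -- nonnegativity of V
  have hr0 : ∀ s, (0:ℝ) ≤ r s := by
    intro s; rcases hr s with h | h <;> rw [h] <;> norm_num
  have hnn : ∀ n s, 0 ≤ V n s := by
    intro n
    induction n with
    | zero => intro s; rw [hV0]
    | succ n ih =>
      intro s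
      rw [hrec]
      have h2 : (0:ℝ) ≤ Finset.univ.sup' Finset.univ_nonempty
          (fun x => (T s x).inf' (hT s x) (fun s' => V n s')) := by
        obtain ⟨x, hx⟩ := (Finset.univ_nonempty : (Finset.univ : Finset X).Nonempty)
        refine le_trans ?_ (Finset.le_sup' _ hx)
        exact Finset.le_inf' _ _ (fun s' _ => ih s')
      have := hr0 s
      linarith
  -- monotonicity of V in n
  have hmono : ∀ n s, V n s ≤ V (n+1) s := by
    intro n
    induction n with
    | zero => intro s; rw [hV0]; exact hnn 1 s
    | succ n ih =>
      intro s
      rw [hrec n s, hrec (n+1) s]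
      have : Finset.univ.sup' Finset.univ_nonempty
            (fun x => (T s x).inf' (hT s x) (fun s' => V n s'))
          ≤ Finset.univ.sup' Finset.univ_nonempty
            (fun x => (T s x).inf' (hT s x) (fun s' => V (n+1) s')) :=
        Finset.sup'_mono_fun (fun x _ => Finset.le_inf' _ _ (fun s' hs' =>
          (Finset.inf'_le _ hs').trans (ih s')))
      linarith
  -- characterization of V (n+1) s = 0
  have hzero : ∀ n s, V (n+1) s = 0 ↔
      (r s = 0 ∧ ∀ x : X, ∃ s' ∈ T s x, V n s' = 0) := by
    intro n s
    rw [hrec]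
    have hsupnn : (0:ℝ) ≤ Finset.univ.sup' Finset.univ_nonempty
        (fun x => (T s x).inf' (hT s x) (fun s' => V n s')) := by
      obtain ⟨x, hx⟩ := (Finset.univ_nonempty : (Finset.univ : Finset X).Nonempty)
      refine le_trans ?_ (Finset.le_sup' _ hx)
      exact Finset.le_inf' _ _ (fun s' _ => hnn n s')
    constructor
    · intro h
      have hr' : r s = 0 := by have := hr0 s; linarith
      have hsup0 : Finset.univ.sup' Finset.univ_nonempty
          (fun x => (T s x).inf' (hT s x) (fun s' => V n s')) = 0 := by linarith
      refine ⟨hr', fun x => ?_⟩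
      have hle : (T s x).inf' (hT s x) (fun s' => V n s') ≤ 0 := by
        have := Finset.le_sup' (fun x => (T s x).inf' (hT s x) (fun s' => V n s'))
          (Finset.mem_univ x)
        linarith
      have hge : (0:ℝ) ≤ (T s x).inf' (hT s x) (fun s' => V n s') :=
        Finset.le_inf' _ _ (fun s' _ => hnn n s')
      have hinf0 : (T s x).inf' (hT s x) (fun s' => V n s') = 0 := le_antisymm hle hge
      obtain ⟨s', hs', hs'eq⟩ := Finset.exists_mem_eq_inf' (hT s x) (fun s' => V n s')
      exact ⟨s', hs', by rw [← hs'eq, hinf0]⟩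
    · rintro ⟨hr', hx⟩
      rw [hr', zero_add]
      apply le_antisymm
      · apply Finset.sup'_le
        intro x _
        obtain ⟨s', hs', hs'0⟩ := hx x
        calc (T s x).inf' (hT s x) (fun s' => V n s') ≤ V n s' := Finset.inf'_le _ hs'
          _ = 0 := hs'0
      · exact hsupnn
  -- the sets A n = {s : V n s = 0}
  let A : ℕ → Finset S := fun n => Finset.univ.filter (fun s => V n s = 0)
  have hmemA : ∀ n s, s ∈ A n ↔ V n s = 0 := by
    intro n s; simp [A]
  have hAsub : ∀ n, A (n+1) ⊆ A n := by
    intro n s hs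
    rw [hmemA] at *
    have h1 := hmono n s
    have h2 := hnn n s
    linarith
  have hAchain : ∀ m n, m ≤ n → A n ⊆ A m := by
    intro m n h
    induction h with
    | refl => exact subset_rfl
    | step h ih => exact (hAsub _).trans ih
  have hAmem' : ∀ n s, s ∈ A (n+1) ↔ (r s = 0 ∧ ∀ x : X, ∃ s' ∈ T s x, s' ∈ A n) := by
    intro n s
    rw [hmemA, hzero]
    simp only [hmemA]
  have hAstep : ∀ n, A n = A (n+1) → A (n+1) = A (n+2) := by
    intro n h
    ext s
    rw [hAmem' n s, hAmem' (n+1) s, ← h]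
  have hEqk : ∀ n, A n = A (n+1) → ∀ k, A (n+k) = A (n+k+1) := by
    intro n h k
    induction k with
    | zero => exact h
    | succ k ih => exact hAstep _ ih
  have hAstab : ∀ n, A n = A (n+1) → ∀ k, A (n+k) = A n := by
    intro n h k
    induction k with
    | zero => rfl
    | succ k ih =>
      show A (n + k + 1) = A n
      rw [← hEqk n h k, ih]
  -- cardinality argument
  have hcard : ∀ n, (∀ m < n, A m ≠ A (m+1)) → (A n).card + n ≤ N := by
    intro n
    induction n with
    | zero => intro _; simpa [hNdef] using Finset.card_le_univ (A 0)
    | succ n ih =>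
      intro h
      have hne : A n ≠ A (n+1) := h n (Nat.lt_succ_self n)
      have hss : A (n+1) ⊂ A n := lt_of_le_of_ne (hAsub n) (fun e => hne e.symm)
      have hlt : (A (n+1)).card < (A n).card := Finset.card_lt_card hss
      have := ih (fun m hm => h m (hm.trans (Nat.lt_succ_self n)))
      omega
  constructor
  · intro hN n
    -- A N is nonempty
    obtain ⟨s₀, _, hs₀⟩ := Finset.exists_mem_eq_inf' (Finset.univ_nonempty) (V N)
    have hs₀0 : V N s₀ = 0 := by rw [← hs₀]; exact hN
    have hANne : (A N).Nonempty := ⟨s₀, (hmemA N s₀).2 hs₀0⟩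
    -- find stabilization point n₀ < N
    have hex : ∃ m < N, A m = A (m+1) := by
      by_contra hc
      push_neg at hc
      have := hcard N hc
      have : (A N).card = 0 := by omega
      rw [Finset.card_eq_zero] at this
      exact hANne.ne_empty this
    obtain ⟨n₀, hn₀N, hn₀⟩ := hex
    have hAn₀ne : (A n₀).Nonempty :=
      hANne.mono (hAchain n₀ N (le_of_lt hn₀N))
    -- A n nonempty for all n
    have hAne : (A n).Nonempty := by
      rcases le_total n n₀ with h | h
      · exact hAn₀ne.mono (hAchain n n₀ h)
      · have : A n = A n₀ := by
          have := hAstab n₀ hn₀ (n - n₀)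
          rwa [Nat.add_sub_cancel' h] at this
        rw [this]; exact hAn₀ne
    obtain ⟨s, hs⟩ := hAne
    have hs0 : V n s = 0 := (hmemA n s).1 hs
    apply le_antisymm
    · calc Finset.univ.inf' Finset.univ_nonempty (V n) ≤ V n s :=
          Finset.inf'_le _ (Finset.mem_univ s)
        _ = 0 := hs0
    · exact Finset.le_inf' _ _ (fun s' _ => hnn n s')
  · intro h
    exact h N
end

section
/- Let Jₙ = Tⁿ∘J₀ with J₀ ≡ 0, where T is a monotone operator on functions S → ℝ (S finite nonempty) satisfying T∘(J + d) = (T∘J) + d for constants d, and Tⁿ denotes n-fold application. Then the sequence n ↦ min_s Jₙ(s) is superadditive: min_s J_{n+m}(s) ≥ min_s Jₙ(s) + min_s Jₘ(s), and the sequence n ↦ max_s Jₙ(s) is subadditive: max_s J_{n+m}(s) ≤ max_s Jₙ(s) + max_s Jₘ(s). -/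
/-!
Comparing `Jₘ` with the constant functions `min Jₘ` and `max Jₘ` and applying the monotone,
shift-commuting operator `Tⁿ` gives `Jₙ + min Jₘ ≤ J_{n+m} ≤ Jₙ + max Jₘ` pointwise, since
`Tⁿ (0 + c) = Tⁿ 0 + c`.
-/

section ShiftCommuting

variable {S : Type*} {T : (S → ℝ) → (S → ℝ)}

theorem iterate_add_const_of_add_const
    (hshift : ∀ (J : S → ℝ) (d : ℝ), T (fun s => J s + d) = fun s => T J s + d)
    (n : ℕ) (J : S → ℝ) (d : ℝ) :
    T^[n] (fun s => J s + d) = fun s => T^[n] J s + d :=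
  Function.Commute.iterate_left (g := fun J s => J s + d) (fun J => hshift J d) n J

theorem apply_add_const_le_of_add_const_le (hT : Monotone T)
    (hshift : ∀ (J : S → ℝ) (d : ℝ), T (fun s => J s + d) = fun s => T J s + d)
    {U V : S → ℝ} {c : ℝ} (h : ∀ s, U s + c ≤ V s) (s : S) :
    T U s + c ≤ T V s := by
  simpa only [hshift] using hT (show (fun s => U s + c) ≤ V from h) s

theorem apply_le_add_const_of_le_add_const (hT : Monotone T)
    (hshift : ∀ (J : S → ℝ) (d : ℝ), T (fun s => J s + d) = fun s => T J s + d)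
    {U V : S → ℝ} {c : ℝ} (h : ∀ s, V s ≤ U s + c) (s : S) :
    T V s ≤ T U s + c := by
  simpa only [hshift] using hT (show V ≤ fun s => U s + c from h) s

variable [Fintype S] [Nonempty S]

theorem inf'_apply_zero_add_inf'_le (hT : Monotone T)
    (hshift : ∀ (J : S → ℝ) (d : ℝ), T (fun s => J s + d) = fun s => T J s + d) (V : S → ℝ) :
    Finset.univ.inf' Finset.univ_nonempty (T 0) + Finset.univ.inf' Finset.univ_nonempty V ≤
      Finset.univ.inf' Finset.univ_nonempty (T V) := by
  refine Finset.le_inf' _ _ fun s _ => ?_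
  have hV : ∀ s, (0 : S → ℝ) s + Finset.univ.inf' Finset.univ_nonempty V ≤ V s := fun s => by
    simpa only [Pi.zero_apply, zero_add] using Finset.inf'_le V (Finset.mem_univ s)
  calc Finset.univ.inf' Finset.univ_nonempty (T 0) + Finset.univ.inf' Finset.univ_nonempty V
      ≤ T 0 s + Finset.univ.inf' Finset.univ_nonempty V := by
        gcongr; exact Finset.inf'_le _ (Finset.mem_univ s)
    _ ≤ T V s := apply_add_const_le_of_add_const_le hT hshift hV s

theorem sup'_apply_le_sup'_apply_zero_add (hT : Monotone T)
    (hshift : ∀ (J : S → ℝ) (d : ℝ), T (fun s => J s + d) = fun s => T J s + d) (V : S → ℝ) :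
    Finset.univ.sup' Finset.univ_nonempty (T V) ≤
      Finset.univ.sup' Finset.univ_nonempty (T 0) + Finset.univ.sup' Finset.univ_nonempty V := by
  refine Finset.sup'_le _ _ fun s _ => ?_
  have hV : ∀ s, V s ≤ (0 : S → ℝ) s + Finset.univ.sup' Finset.univ_nonempty V := fun s => by
    simpa only [Pi.zero_apply, zero_add] using Finset.le_sup' V (Finset.mem_univ s)
  calc T V s ≤ T 0 s + Finset.univ.sup' Finset.univ_nonempty V :=
        apply_le_add_const_of_le_add_const hT hshift hV s
    _ ≤ Finset.univ.sup' Finset.univ_nonempty (T 0) + Finset.univ.sup' Finset.univ_nonempty V := by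
        gcongr; exact Finset.le_sup' _ (Finset.mem_univ s)

end ShiftCommuting

/-- Lemma 5 of the paper: for a monotone, constant-shift-commuting operator `T`
on functions `S → ℝ` and `Jₙ = Tⁿ 0`, the sequence `n ↦ min_s Jₙ s` is
superadditive and the sequence `n ↦ max_s Jₙ s` is subadditive. -/
theorem dp_min_superadditive_max_subadditive {S : Type*} [Fintype S] [Nonempty S]
    (T : (S → ℝ) → (S → ℝ))
    (hmono : ∀ W V : S → ℝ, (∀ s, V s ≤ W s) → ∀ s, T V s ≤ T W s)
    (hshift : ∀ (J : S → ℝ) (d : ℝ), T (fun s => J s + d) = fun s => T J s + d)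
    (J : ℕ → S → ℝ)
    (hJ : ∀ n, J n = T^[n] (fun _ => 0)) :
    (∀ n m : ℕ, Finset.univ.inf' Finset.univ_nonempty (J n) +
        Finset.univ.inf' Finset.univ_nonempty (J m) ≤
        Finset.univ.inf' Finset.univ_nonempty (J (n + m))) ∧
      (∀ n m : ℕ, Finset.univ.sup' Finset.univ_nonempty (J (n + m)) ≤
        Finset.univ.sup' Finset.univ_nonempty (J n) +
        Finset.univ.sup' Finset.univ_nonempty (J m)) := by
  have hT : Monotone T := fun V W h => hmono W V h
  have hJn : ∀ n, J n = T^[n] 0 := hJ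
  have hJadd : ∀ n m, J (n + m) = T^[n] (J m) := fun n m => by
    rw [hJn, hJn, Function.iterate_add_apply]
  refine ⟨fun n m => ?_, fun n m => ?_⟩
  · rw [hJadd, hJn n]
    exact inf'_apply_zero_add_inf'_le (hT.iterate n) (iterate_add_const_of_add_const hshift n) _
  · rw [hJadd, hJn n]
    exact sup'_apply_le_sup'_apply_zero_add (hT.iterate n) (iterate_add_const_of_add_const hshift n) _
end

section
/- Let T be a monotone, constant-shift-commuting operator on functions S → ℝ, S finite nonempty, Jₙ = Tⁿ∘0. Then lim_{n→∞} min_s Jₙ(s)/n = sup_n min_s Jₙ(s)/n and lim_{n→∞} max_s Jₙ(s)/n = inf_n max_s Jₙ(s)/n (assuming these are finite), and consequently for every k ≥ 1: min_s Jₖ(s)/k ≤ lim_n min_s Jₙ(s)/n ≤ lim_n max_s Jₙ(s)/n ≤ max_s Jₖ(s)/k. -/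
/-!
Write `m n` and `M n` for the minimum and maximum of `Jₙ = Tⁿ 0`. Since `T` is monotone and
commutes with adding constants, `J b` lies between the constants `m b` and `M b`, so applying
`Tᵃ` gives `J a + m b ≤ J (a + b) ≤ J a + M b`. Hence `m` is superadditive and `M` is
subadditive, and Fekete's lemma makes `m n / n` and `M n / n` converge to their supremum and
infimum over `n ≥ 1`; as `m ≤ M`, the two limits are ordered.
-/

open Filter Topology Finset

namespace Subadditive

theorem tendsto_iInf_div {u : ℕ → ℝ} (h : Subadditive u)
    (hbdd : BddBelow (Set.range fun n : {n : ℕ // 1 ≤ n} => u n / n)) :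
    Tendsto (fun n => u n / n) atTop (𝓝 (⨅ n : {n : ℕ // 1 ≤ n}, u n / n)) := by
  have hbdd' : BddBelow (Set.range fun n => u n / n) := by
    refine (hbdd.insert 0).mono ?_
    rintro _ ⟨n, rfl⟩
    rcases Nat.eq_zero_or_pos n with rfl | hn
    · simp
    · exact Set.mem_insert_of_mem _ ⟨⟨n, hn⟩, rfl⟩
  convert h.tendsto_lim hbdd' using 2
  rw [Subadditive.lim, iInf, Set.image_eq_range]
  rfl

end Subadditive

theorem tendsto_iSup_div_of_superadditive {u : ℕ → ℝ} (h : ∀ m n, u m + u n ≤ u (m + n))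
    (hbdd : BddAbove (Set.range fun n : {n : ℕ // 1 ≤ n} => u n / n)) :
    Tendsto (fun n => u n / n) atTop (𝓝 (⨆ n : {n : ℕ // 1 ≤ n}, u n / n)) := by
  have hneg : Subadditive (-u) := fun m n => by
    simp only [Pi.neg_apply]
    linarith [h m n]
  have hbdd' : BddBelow (Set.range fun n : {n : ℕ // 1 ≤ n} => (-u) n / n) := by
    simpa only [Pi.neg_apply, neg_div] using hbdd.range_neg
  have := (hneg.tendsto_iInf_div hbdd').neg
  simpa only [Pi.neg_apply, neg_div, neg_neg, iInf, ← Set.neg_range, Real.sInf_neg, iSup]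
    using this

section ConstShift

variable {S : Type*} {U : (S → ℝ) → (S → ℝ)}

theorem iterate_add_const
    (hshift : ∀ (V : S → ℝ) (d : ℝ), U (fun s => V s + d) = fun s => U V s + d)
    (n : ℕ) (V : S → ℝ) (d : ℝ) : U^[n] (fun s => V s + d) = fun s => U^[n] V s + d :=
  Function.Commute.iterate_left (g := fun V s => V s + d) (fun V => hshift V d) n V

variable [Fintype S] [Nonempty S]

theorem sup'_apply_le_add (hU : Monotone U)
    (hshift : ∀ (V : S → ℝ) (d : ℝ), U (fun s => V s + d) = fun s => U V s + d)
    (V : S → ℝ) :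
    univ.sup' univ_nonempty (U V) ≤
      univ.sup' univ_nonempty (U 0) + univ.sup' univ_nonempty V := by
  set c := univ.sup' univ_nonempty V
  refine sup'_le _ _ fun s _ => ?_
  have hV : V ≤ fun s => (0 : S → ℝ) s + c := fun s => by
    simpa using le_sup' V (mem_univ s)
  calc U V s ≤ U 0 s + c := by simpa only [hshift] using hU hV s
    _ ≤ univ.sup' univ_nonempty (U 0) + c := by gcongr; exact le_sup' _ (mem_univ s)

theorem add_inf'_le_inf'_apply (hU : Monotone U)
    (hshift : ∀ (V : S → ℝ) (d : ℝ), U (fun s => V s + d) = fun s => U V s + d)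
    (V : S → ℝ) :
    univ.inf' univ_nonempty (U 0) + univ.inf' univ_nonempty V ≤
      univ.inf' univ_nonempty (U V) := by
  set c := univ.inf' univ_nonempty V
  refine le_inf' _ _ fun s _ => ?_
  have hV : (fun s => (0 : S → ℝ) s + c) ≤ V := fun s => by
    simpa using inf'_le V (mem_univ s)
  calc univ.inf' univ_nonempty (U 0) + c
      ≤ U 0 s + c := by gcongr; exact inf'_le _ (mem_univ s)
    _ ≤ U V s := by simpa only [hshift] using hU hV s

theorem subadditive_sup'_iterate (hU : Monotone U)
    (hshift : ∀ (V : S → ℝ) (d : ℝ), U (fun s => V s + d) = fun s => U V s + d) :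
    Subadditive fun n => univ.sup' univ_nonempty (U^[n] 0) := fun a b => by
  simpa only [Function.iterate_add_apply] using
    sup'_apply_le_add (hU.iterate a) (iterate_add_const hshift a) (U^[b] 0)

theorem superadditive_inf'_iterate (hU : Monotone U)
    (hshift : ∀ (V : S → ℝ) (d : ℝ), U (fun s => V s + d) = fun s => U V s + d)
    (a b : ℕ) :
    univ.inf' univ_nonempty (U^[a] 0) + univ.inf' univ_nonempty (U^[b] 0) ≤
      univ.inf' univ_nonempty (U^[a + b] 0) := by
  simpa only [Function.iterate_add_apply] using
    add_inf'_le_inf'_apply (hU.iterate a) (iterate_add_const hshift a) (U^[b] 0)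

end ConstShift

/-- Theorem 4 of the paper: for a monotone, constant-shift-commuting operator `T`
and `Jₙ = Tⁿ 0`, the normalized min values converge to their supremum, the
normalized max values converge to their infimum, and every iteration `k ≥ 1`
gives lower and upper bounds sandwiching the limits. -/
theorem dp_value_iteration_bounds {S : Type*} [Fintype S] [Nonempty S]
    (T : (S → ℝ) → (S → ℝ))
    (hmono : ∀ W V : S → ℝ, (∀ s, V s ≤ W s) → ∀ s, T V s ≤ T W s)
    (hshift : ∀ (J : S → ℝ) (d : ℝ), T (fun s => J s + d) = fun s => T J s + d)
    (J : ℕ → S → ℝ)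
    (hJ : ∀ n, J n = T^[n] (fun _ => 0))
    (hbddAbove : BddAbove (Set.range fun n : {n : ℕ // 1 ≤ n} =>
      Finset.univ.inf' Finset.univ_nonempty (J n) / n))
    (hbddBelow : BddBelow (Set.range fun n : {n : ℕ // 1 ≤ n} =>
      Finset.univ.sup' Finset.univ_nonempty (J n) / n)) :
    Filter.Tendsto (fun n : ℕ => Finset.univ.inf' Finset.univ_nonempty (J n) / n)
        Filter.atTop
        (nhds (⨆ n : {n : ℕ // 1 ≤ n},
          Finset.univ.inf' Finset.univ_nonempty (J n) / n)) ∧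
      Filter.Tendsto (fun n : ℕ => Finset.univ.sup' Finset.univ_nonempty (J n) / n)
        Filter.atTop
        (nhds (⨅ n : {n : ℕ // 1 ≤ n},
          Finset.univ.sup' Finset.univ_nonempty (J n) / n)) ∧
      ∀ k : ℕ, 1 ≤ k →
        Finset.univ.inf' Finset.univ_nonempty (J k) / k ≤
          (⨆ n : {n : ℕ // 1 ≤ n},
            Finset.univ.inf' Finset.univ_nonempty (J n) / n) ∧
        (⨆ n : {n : ℕ // 1 ≤ n},
            Finset.univ.inf' Finset.univ_nonempty (J n) / n) ≤
          (⨅ n : {n : ℕ // 1 ≤ n},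
            Finset.univ.sup' Finset.univ_nonempty (J n) / n) ∧
        (⨅ n : {n : ℕ // 1 ≤ n},
            Finset.univ.sup' Finset.univ_nonempty (J n) / n) ≤
          Finset.univ.sup' Finset.univ_nonempty (J k) / k := by
  obtain rfl : J = fun n => T^[n] 0 := funext hJ
  have hT : Monotone T := fun V W h => hmono W V h
  have hmin := tendsto_iSup_div_of_superadditive (superadditive_inf'_iterate hT hshift) hbddAbove
  have hmax := (subadditive_sup'_iterate hT hshift).tendsto_iInf_div hbddBelow
  refine ⟨hmin, hmax, fun k hk =>
    ⟨le_ciSup hbddAbove ⟨k, hk⟩, ?_, ciInf_le hbddBelow ⟨k, hk⟩⟩⟩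
  refine le_of_tendsto_of_tendsto' hmin hmax fun n => ?_
  gcongr
  exact (inf'_le _ (mem_univ (Classical.arbitrary S))).trans (le_sup' _ (mem_univ _))
end

section
/- Let T be an operator on functions S → ℝ (S finite nonempty) that is monotone and satisfies T∘(J + d) = (T∘J) + d for all constants d ∈ ℝ. Suppose there exist a bounded function g : S → ℝ and a constant ρ ∈ ℝ such that g(s) + ρ = (T∘g)(s) for all s ∈ S. Then for Jₙ = Tⁿ∘J₀ with J₀ ≡ 0, we have lim_{n→∞} Jₙ(s)/n = ρ for every s ∈ S. -/
/-- Theorem 5 of the paper (Bellman equation): if a bounded function `g` and a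
constant `ρ` satisfy `g s + ρ = (T g) s` for a monotone, constant-shift-commuting
operator `T`, then for `Jₙ = Tⁿ 0` we have `Jₙ s / n → ρ` for every `s`. -/
theorem bellman_equation_limit {S : Type*} [Fintype S] [Nonempty S]
    (T : (S → ℝ) → (S → ℝ))
    (hmono : ∀ W V : S → ℝ, (∀ s, V s ≤ W s) → ∀ s, T V s ≤ T W s)
    (hshift : ∀ (J : S → ℝ) (d : ℝ), T (fun s => J s + d) = fun s => T J s + d)
    (g : S → ℝ) (ρ : ℝ)
    (hbdd : ∃ C : ℝ, ∀ s, |g s| ≤ C)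
    (hbellman : ∀ s, g s + ρ = T g s)
    (J : ℕ → S → ℝ)
    (hJ : ∀ n, J n = T^[n] (fun _ => 0)) :
    ∀ s, Filter.Tendsto (fun n : ℕ => J n s / n) Filter.atTop (nhds ρ) := by
  obtain ⟨C, hC⟩ := hbdd
  -- iterated shift
  have hshiftn : ∀ (n : ℕ) (f : S → ℝ) (d : ℝ),
      T^[n] (fun s => f s + d) = fun s => T^[n] f s + d := by
    intro n
    induction n with
    | zero => intro f d; simp
    | succ n ih =>
      intro f d
      rw [Function.iterate_succ_apply, hshift, ih]
      simp [Function.iterate_succ_apply]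
  -- iterated monotone
  have hmonon : ∀ (n : ℕ) (W V : S → ℝ), (∀ s, V s ≤ W s) → ∀ s, T^[n] V s ≤ T^[n] W s := by
    intro n
    induction n with
    | zero => intro W V h; simpa using h
    | succ n ih =>
      intro W V h s
      rw [Function.iterate_succ_apply', Function.iterate_succ_apply']
      exact hmono _ _ (ih _ _ h) s
  -- T^[n] g = g + n ρ
  have hgn : ∀ n : ℕ, T^[n] g = fun s => g s + n * ρ := by
    intro n
    induction n with
    | zero => simp
    | succ n ih =>
      rw [Function.iterate_succ_apply', ih]
      have : (fun s => g s + n * ρ) = fun s => g s + (n : ℝ) * ρ := rfl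
      rw [hshift g ((n : ℝ) * ρ)]
      funext s
      rw [← hbellman s]
      push_cast
      ring
  -- sandwich
  have key : ∀ (n : ℕ) (s : S), |J n s - n * ρ| ≤ 2 * C := by
    intro n s
    have h1 : ∀ t, g t - C ≤ (0 : ℝ) := fun t => by
      have := abs_le.mp (hC t); linarith [this.2]
    have h2 : ∀ t, (0 : ℝ) ≤ g t + C := fun t => by
      have := abs_le.mp (hC t); linarith [this.1]
    have hlo : T^[n] (fun t => g t + -C) s ≤ T^[n] (fun _ => (0 : ℝ)) s :=
      hmonon n _ _ (fun t => by have := h1 t; linarith) s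
    have hhi : T^[n] (fun _ => (0 : ℝ)) s ≤ T^[n] (fun t => g t + C) s :=
      hmonon n _ _ h2 s
    rw [hshiftn n g (-C), hgn n] at hlo
    rw [hshiftn n g C, hgn n] at hhi
    rw [hJ n]
    have hgC := abs_le.mp (hC s)
    rw [abs_le]
    constructor <;> simp only at hlo hhi <;> nlinarith [hgC.1, hgC.2]
  intro s
  have h0 : Filter.Tendsto (fun n : ℕ => J n s / n - ρ) Filter.atTop (nhds 0) := by
    apply squeeze_zero_norm' (a := fun n : ℕ => 2 * C / n)
    · filter_upwards [Filter.eventually_gt_atTop 0] with n hn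
      have hn' : (0 : ℝ) < n := by exact_mod_cast hn
      have : J n s / n - ρ = (J n s - n * ρ) / n := by field_simp
      rw [Real.norm_eq_abs, this, abs_div, abs_of_pos hn']
      gcongr
      exact key n s
    · exact Filter.Tendsto.div_atTop tendsto_const_nhds tendsto_natCast_atTop_atTop
  have := h0.add (tendsto_const_nhds (x := ρ))
  simpa using this
end
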